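/- arXiv:1902.08460 — 3 statements merged into one kernel-verified Lean document; each statement's English description precedes it below -/
import Mathlib

section
/- Let ρ be a positive definite density matrix on ℂⁿ ⊗ ℂᵐ (i.e., ρ ∈ M_{mn}(ℂ), ρ > 0, Tr ρ = 1). Then the Choi map Φ_ρ : Mₙ(ℂ) → Mₘ(ℂ) associated to ρ via the Choi–Jamiołkowski isomorphism is strictly positive. -/
open Matrix
open scoped ComplexOrder
open scoped Kronecker BigOperators
noncomputable def choiMatrix {n m : ℕ}
    (Φ : Matrix (Fin n) (Fin n) ℂ → Matrix (Fin m) (Fin m) ℂ) :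
    Matrix (Fin n × Fin m) (Fin n × Fin m) ℂ :=
  ∑ i : Fin n, ∑ j : Fin n,
    (Matrix.single i j (1 : ℂ)) ⊗ₖ Φ (Matrix.single i j (1 : ℂ))

/-!
Writing ρ for the Choi matrix, `Φ(A)ₖₗ = ∑ᵢⱼ Aᵢⱼ ρ₍ᵢ,ₖ₎₍ⱼ,ₗ₎`. Hence for a rank-one `A = u u*`
the quadratic form `y* Φ(A) y` is `x* ρ x` with `x = ū ⊗ y`, which is positive as soon as `u` and
`y` are nonzero. A nonzero positive semidefinite `A` is a sum of such rank-one terms, at least one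
of them with `u ≠ 0`.
-/

section
variable {n m : ℕ}

theorem choiMatrix_apply (Φ : Matrix (Fin n) (Fin n) ℂ → Matrix (Fin m) (Fin m) ℂ)
    (i j : Fin n) (k l : Fin m) :
    choiMatrix Φ (i, k) (j, l) = Φ (single i j 1) k l := by
  simp [choiMatrix, Matrix.sum_apply, single, ite_and]

variable (Φ : Matrix (Fin n) (Fin n) ℂ →ₗ[ℂ] Matrix (Fin m) (Fin m) ℂ)

theorem apply_eq_sum_mul_choiMatrix (A : Matrix (Fin n) (Fin n) ℂ) (k l : Fin m) :
    Φ A k l = ∑ i, ∑ j, A i j * choiMatrix Φ (i, k) (j, l) := by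
  conv_lhs => rw [matrix_eq_sum_single A]
  have hsingle (i j) : single i j (A i j) = A i j • single i j 1 := by
    rw [smul_single, smul_eq_mul, mul_one]
  simp only [map_sum, Matrix.sum_apply, choiMatrix_apply, hsingle, map_smul, Matrix.smul_apply,
    smul_eq_mul]

theorem map_conjTranspose_of_isHermitian_choiMatrix (hΦ : (choiMatrix Φ).IsHermitian)
    (A : Matrix (Fin n) (Fin n) ℂ) : Φ Aᴴ = (Φ A)ᴴ := by
  ext k l
  simp only [conjTranspose_apply, apply_eq_sum_mul_choiMatrix, star_sum, star_mul',
    hΦ.apply]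
  exact Finset.sum_comm

theorem dotProduct_mulVec_map_vecMulVec (u : Fin n → ℂ) (y : Fin m → ℂ) :
    star y ⬝ᵥ (Φ (vecMulVec u (star u)) *ᵥ y) =
      star (fun p : Fin n × Fin m => star (u p.1) * y p.2) ⬝ᵥ (choiMatrix Φ *ᵥ
        fun p => star (u p.1) * y p.2) := by
  simp only [dotProduct, mulVec, apply_eq_sum_mul_choiMatrix, vecMulVec_apply,
    Fintype.sum_prod_type, Pi.star_apply, star_mul', star_star, Finset.mul_sum, Finset.sum_mul]
  -- reorder the summation indices from `k l i j` to `i k j l`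
  refine (Finset.sum_congr rfl fun k _ => Finset.sum_comm).trans <| Finset.sum_comm.trans <|
    Finset.sum_congr rfl fun i _ => Finset.sum_congr rfl fun k _ => Finset.sum_comm.trans <|
      Finset.sum_congr rfl fun j _ => Finset.sum_congr rfl fun l _ => by ring

theorem posSemidef_map_vecMulVec (hΦ : (choiMatrix Φ).PosSemidef) (u : Fin n → ℂ) :
    (Φ (vecMulVec u (star u))).PosSemidef := by
  refine .of_dotProduct_mulVec_nonneg ?_ fun y => ?_
  · rw [IsHermitian, ← map_conjTranspose_of_isHermitian_choiMatrix Φ hΦ.isHermitian,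
      conjTranspose_vecMulVec, star_star]
  · rw [dotProduct_mulVec_map_vecMulVec]
    exact hΦ.dotProduct_mulVec_nonneg _

theorem posDef_map_vecMulVec (hΦ : (choiMatrix Φ).PosDef) {u : Fin n → ℂ} (hu : u ≠ 0) :
    (Φ (vecMulVec u (star u))).PosDef := by
  refine .of_dotProduct_mulVec_pos (posSemidef_map_vecMulVec Φ hΦ.posSemidef u).isHermitian
    fun y hy => ?_
  obtain ⟨i, hi⟩ := Function.ne_iff.mp hu
  obtain ⟨k, hk⟩ := Function.ne_iff.mp hy
  rw [dotProduct_mulVec_map_vecMulVec]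
  exact hΦ.dotProduct_mulVec_pos fun hx => mul_ne_zero (star_ne_zero.mpr hi) hk (congrFun hx (i, k))

theorem posDef_map_of_posDef_choiMatrix (hΦ : (choiMatrix Φ).PosDef)
    {A : Matrix (Fin n) (Fin n) ℂ} (hA : A.PosSemidef) (hA0 : A ≠ 0) : (Φ A).PosDef := by
  obtain ⟨r, v, rfl⟩ := posSemidef_iff_eq_sum_vecMulVec.mp hA
  obtain ⟨s, hs⟩ : ∃ s, v s ≠ 0 := by
    by_contra! h
    simp [h] at hA0
  rw [map_sum, ← Finset.add_sum_erase _ _ (Finset.mem_univ s)]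
  exact (posDef_map_vecMulVec Φ hΦ hs).add_posSemidef <|
    posSemidef_sum _ fun t _ => posSemidef_map_vecMulVec Φ hΦ.posSemidef (v t)

end

theorem choi_map_strictly_positive_general (n m : ℕ)
    (Φ : Matrix (Fin n) (Fin n) ℂ →ₗ[ℂ] Matrix (Fin m) (Fin m) ℂ)
    (ρ : Matrix (Fin n × Fin m) (Fin n × Fin m) ℂ)
    (hρΦ : ρ = choiMatrix (fun X => Φ X))
    (hρ : ρ.PosDef) :
    ∀ A : Matrix (Fin n) (Fin n) ℂ, A.PosSemidef → A ≠ 0 → (Φ A).PosDef := by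
  subst hρΦ
  exact fun _ => posDef_map_of_posDef_choiMatrix Φ hρ

/-- The Choi map of an invertible (positive definite) density matrix is strictly positive. -/
theorem choi_map_strictly_positive (n m : ℕ)
    (Φ : Matrix (Fin n) (Fin n) ℂ →ₗ[ℂ] Matrix (Fin m) (Fin m) ℂ)
    (ρ : Matrix (Fin n × Fin m) (Fin n × Fin m) ℂ)
    (hρΦ : ρ = choiMatrix (fun X => Φ X))
    (hρ : ρ.PosDef) (htr : ρ.trace = 1) :
    ∀ A : Matrix (Fin n) (Fin n) ℂ, A.PosSemidef → A ≠ 0 → (Φ A).PosDef :=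
  choi_map_strictly_positive_general n m Φ ρ hρΦ hρ
end

section
/- If Φ : Mₙ(ℂ) → Mₘ(ℂ) is a strictly positive linear map, then its projective diameter Δ(Φ) = sup{ d_H(Φ(A), Φ(B)) : A, B positive definite } is finite. -/
/-!
Strict positivity makes `Φ ρ` positive definite for every density matrix `ρ`, so by compactness
of the density matrices and of the unit sphere there are `0 < ε ≤ M` with
`ε ‖x‖² ≤ ⟪x, Φ ρ x⟫ ≤ M ‖x‖²`. Writing a positive definite `A` as `tr A • ρ` gives
`ε tr A • 1 ≤ Φ A ≤ M tr A • 1`, hence `(ε tr A / (M tr B)) • Φ B ≤ Φ A ≤ (M tr A / (ε tr B)) • Φ B`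
and `d_H (Φ A) (Φ B) ≤ log ((M / ε) ^ 2)`.
-/

open Matrix
open scoped ComplexOrder
open scoped Kronecker BigOperators
noncomputable def dH {n : ℕ} (A B : Matrix (Fin n) (Fin n) ℂ) : ℝ :=
  Real.log (sInf {l : ℝ | ((l : ℂ) • B - A).PosSemidef} /
    sSup {l : ℝ | (A - (l : ℂ) • B).PosSemidef})

namespace Matrix

variable {κ : Type*} [Fintype κ]

lemma PosSemidef.trace_eq_ofReal_re {A : Matrix κ κ ℂ} (hA : A.PosSemidef) :
    A.trace = (A.trace.re : ℂ) :=
  Complex.ext rfl (Complex.nonneg_iff.mp hA.trace_nonneg).2.symm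

lemma PosSemidef.trace_re_pos {A : Matrix κ κ ℂ} (hA : A.PosSemidef) (h0 : A ≠ 0) :
    0 < A.trace.re := by
  refine (Complex.nonneg_iff.mp hA.trace_nonneg).1.lt_of_ne fun h => h0 ?_
  rw [← hA.trace_eq_zero_iff, hA.trace_eq_ofReal_re, ← h, Complex.ofReal_zero]

lemma PosSemidef.exists_eq_trace_smul {A : Matrix κ κ ℂ} (hA : A.PosSemidef) (h0 : A ≠ 0) :
    ∃ ρ : Matrix κ κ ℂ, (ρ.PosSemidef ∧ ρ.trace = 1) ∧ A = (A.trace.re : ℂ) • ρ := by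
  have htr : A.trace ≠ 0 := hA.trace_eq_zero_iff.not.mpr h0
  refine ⟨A.trace⁻¹ • A, ⟨hA.smul (inv_nonneg.mpr hA.trace_nonneg), ?_⟩, ?_⟩
  · rw [trace_smul, smul_eq_mul, inv_mul_cancel₀ htr]
  · rw [← hA.trace_eq_ofReal_re, smul_smul, mul_inv_cancel₀ htr, one_smul]

lemma nonneg_of_posSemidef_smul {Y : Matrix κ κ ℂ} (hY : Y.PosSemidef) (hY0 : Y ≠ 0) {c : ℝ}
    (hc : ((c : ℂ) • Y).PosSemidef) : 0 ≤ c := by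
  have h := hc.trace_nonneg
  rw [trace_smul, hY.trace_eq_ofReal_re, smul_eq_mul, ← Complex.ofReal_mul,
    Complex.zero_le_real] at h
  exact (mul_nonneg_iff_of_pos_right (hY.trace_re_pos hY0)).mp h

lemma posSemidef_sub_of_re_le {X Y : Matrix κ κ ℂ} (hX : X.IsHermitian) (hY : Y.IsHermitian)
    (h : ∀ x : κ → ℂ, (star x ⬝ᵥ X *ᵥ x).re ≤ (star x ⬝ᵥ Y *ᵥ x).re) : (Y - X).PosSemidef := by
  refine .of_dotProduct_mulVec_nonneg (hY.sub hX) fun x => ?_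
  rw [Complex.nonneg_iff]
  refine ⟨?_, ((hY.sub hX).im_star_dotProduct_mulVec_self x).symm⟩
  simpa [sub_mulVec, dotProduct_sub] using h x

lemma re_star_smul_dotProduct_mulVec_smul (Z : Matrix κ κ ℂ) (t s : ℝ) (u : κ → ℂ) :
    (star ((s : ℂ) • u) ⬝ᵥ ((t : ℂ) • Z) *ᵥ ((s : ℂ) • u)).re =
      t * s ^ 2 * (star u ⬝ᵥ Z *ᵥ u).re := by
  simp only [star_smul, smul_mulVec, mulVec_smul, smul_dotProduct, dotProduct_smul, smul_eq_mul,
    RCLike.star_def, Complex.conj_ofReal]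
  rw [← mul_assoc, ← mul_assoc]
  norm_cast
  rw [Complex.re_ofReal_mul]
  ring

end Matrix

section Frobenius

attribute [local instance] Matrix.frobeniusNormedAddCommGroup Matrix.frobeniusNormedSpace

variable {ι : Type*} [Fintype ι]

lemma Matrix.frobenius_norm_sq_eq_re_trace (B : Matrix ι ι ℂ) :
    ‖B‖ ^ 2 = (Bᴴ * B).trace.re := by
  rw [frobenius_norm_def, ← Real.sqrt_eq_rpow, Real.sq_sqrt (by positivity), trace, Complex.re_sum]
  simp only [diag_apply, mul_apply, conjTranspose_apply, Complex.re_sum, Real.rpow_two]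
  rw [Finset.sum_comm]
  congr! with i _ j _
  rw [RCLike.star_def, Complex.conj_mul', ← Complex.ofReal_pow, Complex.ofReal_re]

open scoped MatrixOrder in
lemma isCompact_setOf_posSemidef_trace_eq_one [DecidableEq ι] :
    IsCompact {ρ : Matrix ι ι ℂ | ρ.PosSemidef ∧ ρ.trace = 1} := by
  have hK : {ρ : Matrix ι ι ℂ | ρ.PosSemidef ∧ ρ.trace = 1} =
      (fun B => Bᴴ * B) '' Metric.sphere 0 1 := by
    ext ρ
    constructor
    · rintro ⟨hρ, htr⟩
      obtain ⟨B, rfl⟩ := CStarAlgebra.nonneg_iff_eq_star_mul_self.mp hρ.nonneg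
      refine ⟨B, ?_, rfl⟩
      have h := B.frobenius_norm_sq_eq_re_trace
      rw [show Bᴴ * B = star B * B from rfl, htr, Complex.one_re] at h
      exact mem_sphere_zero_iff_norm.mpr
        ((pow_eq_one_iff_of_nonneg (norm_nonneg B) two_ne_zero).mp h)
    · rintro ⟨B, hB, rfl⟩
      have hpsd := posSemidef_conjTranspose_mul_self B
      refine ⟨hpsd, ?_⟩
      rw [hpsd.trace_eq_ofReal_re, ← B.frobenius_norm_sq_eq_re_trace,
        mem_sphere_zero_iff_norm.mp hB]
      simp
  rw [hK]
  exact (isCompact_sphere 0 1).image (by fun_prop)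

end Frobenius

lemma exists_eq_norm_smul_of_ne_zero {E : Type*} [NormedAddCommGroup E] [NormedSpace ℂ E]
    {x : E} (hx : x ≠ 0) : ∃ u : E, ‖u‖ = 1 ∧ x = (‖x‖ : ℂ) • u := by
  have hnx : ‖x‖ ≠ 0 := norm_ne_zero_iff.mpr hx
  refine ⟨(‖x‖⁻¹ : ℂ) • x, ?_, ?_⟩
  · rw [norm_smul, norm_inv, Complex.norm_real, norm_norm, inv_mul_cancel₀ hnx]
  · rw [smul_smul, mul_inv_cancel₀ (by exact_mod_cast hnx), one_smul]

theorem exists_trace_mul_norm_sq_bounds {ι κ : Type*} [Fintype ι] [DecidableEq ι] [Fintype κ]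
    (Φ : Matrix ι ι ℂ →ₗ[ℂ] Matrix κ κ ℂ)
    (hΦ : ∀ A : Matrix ι ι ℂ, A.PosSemidef → A ≠ 0 → (Φ A).PosDef) :
    ∃ ε M : ℝ, 0 < ε ∧ ε ≤ M ∧ ∀ A : Matrix ι ι ℂ, A.PosSemidef → ∀ x : κ → ℂ,
      ε * A.trace.re * ‖x‖ ^ 2 ≤ (star x ⬝ᵥ Φ A *ᵥ x).re ∧
        (star x ⬝ᵥ Φ A *ᵥ x).re ≤ M * A.trace.re * ‖x‖ ^ 2 := by
  set K := {ρ : Matrix ι ι ℂ | ρ.PosSemidef ∧ ρ.trace = 1} ×ˢ Metric.sphere (0 : κ → ℂ) 1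
  set g : Matrix ι ι ℂ × (κ → ℂ) → ℝ := fun p => (star p.2 ⬝ᵥ Φ p.1 *ᵥ p.2).re
  have hK : IsCompact K := isCompact_setOf_posSemidef_trace_eq_one.prod (isCompact_sphere 0 1)
  have hg : Continuous g := by
    have := Φ.continuous_of_finiteDimensional
    fun_prop
  obtain ⟨ε, hε, hεg⟩ := hK.exists_forall_le' hg.continuousOn (a := 0) fun p hp =>
    (hΦ p.1 hp.1.1 (by rintro h; simpa [h] using hp.1.2)).re_dotProduct_pos
      (norm_ne_zero_iff.mp (by simp [mem_sphere_zero_iff_norm.mp hp.2]))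
  obtain ⟨M, hM⟩ := hK.bddAbove_image hg.continuousOn
  refine ⟨ε, max M ε, hε, le_max_right _ _, fun A hA x => ?_⟩
  rcases eq_or_ne A 0 with rfl | hA0
  · simp
  rcases eq_or_ne x 0 with rfl | hx0
  · simp
  obtain ⟨ρ, hρ, hAρ⟩ := hA.exists_eq_trace_smul hA0
  obtain ⟨u, hu, hxu⟩ := exists_eq_norm_smul_of_ne_zero hx0
  have hmem : (ρ, u) ∈ K := ⟨hρ, mem_sphere_zero_iff_norm.mpr hu⟩
  have hscale : (star x ⬝ᵥ Φ A *ᵥ x).re = A.trace.re * ‖x‖ ^ 2 * g (ρ, u) := by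
    conv_lhs => rw [hAρ, map_smul, hxu]
    exact re_star_smul_dotProduct_mulVec_smul _ _ _ _
  have hc : 0 ≤ A.trace.re * ‖x‖ ^ 2 :=
    mul_nonneg (Complex.nonneg_iff.mp hA.trace_nonneg).1 (sq_nonneg _)
  rw [hscale]
  constructor
  · nlinarith [hεg _ hmem]
  · nlinarith [hM ⟨_, hmem, rfl⟩, le_max_left M ε]

lemma dH_le_log_div {m : ℕ} {X Y : Matrix (Fin m) (Fin m) ℂ} (hY : Y.PosSemidef) {α β : ℝ}
    (hα : 0 < α) (hαβ : α ≤ β) (hlo : (X - (α : ℂ) • Y).PosSemidef)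
    (hhi : ((β : ℂ) • Y - X).PosSemidef) : dH X Y ≤ Real.log (β / α) := by
  rw [dH]
  set S := {l : ℝ | ((l : ℂ) • Y - X).PosSemidef}
  set T := {l : ℝ | (X - (l : ℂ) • Y).PosSemidef}
  rcases eq_or_ne Y 0 with rfl | hY0
  -- Both sets are then all of `ℝ`, and `dH` takes the junk value `log (0 / 0) = 0`.
  · have hS : S = Set.univ := Set.eq_univ_of_forall fun _ => by simpa [S] using hhi
    have hT : T = Set.univ := Set.eq_univ_of_forall fun _ => by simpa [T] using hlo
    rw [hS, hT, Real.sInf_of_not_bddBelow not_bddBelow_univ, Real.sSup_univ, div_zero,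
      Real.log_zero]
    exact Real.log_nonneg ((one_le_div hα).mpr hαβ)
  have hS : ∀ l ∈ S, α ≤ l := fun l hl => by
    have h : (((l - α : ℝ) : ℂ) • Y).PosSemidef := by
      convert hl.add hlo using 1; push_cast; rw [sub_smul]; abel
    linarith [nonneg_of_posSemidef_smul hY hY0 h]
  have hT : ∀ l ∈ T, l ≤ β := fun l hl => by
    have h : (((β - l : ℝ) : ℂ) • Y).PosSemidef := by
      convert hl.add hhi using 1; push_cast; rw [sub_smul]; abel
    linarith [nonneg_of_posSemidef_smul hY hY0 h]
  have hInf : sInf S ≤ β := csInf_le ⟨α, hS⟩ hhi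
  have hSup : α ≤ sSup T := le_csSup ⟨β, hT⟩ hlo
  have hInf_pos : 0 < sInf S := hα.trans_le (le_csInf ⟨β, hhi⟩ hS)
  exact Real.log_le_log (div_pos hInf_pos (hα.trans_le hSup))
    (div_le_div₀ (hα.trans_le hαβ).le hInf hα hSup)

lemma dH_le_log_of_re_bounds {m : ℕ} {X Y : Matrix (Fin m) (Fin m) ℂ} (hX : X.IsHermitian)
    (hY : Y.PosSemidef) {p P q Q : ℝ} (hp : 0 < p) (hq : 0 < q) (hpP : p ≤ P) (hqQ : q ≤ Q)
    (hXb : ∀ x, p * ‖x‖ ^ 2 ≤ (star x ⬝ᵥ X *ᵥ x).re ∧ (star x ⬝ᵥ X *ᵥ x).re ≤ P * ‖x‖ ^ 2)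
    (hYb : ∀ x, q * ‖x‖ ^ 2 ≤ (star x ⬝ᵥ Y *ᵥ x).re ∧ (star x ⬝ᵥ Y *ᵥ x).re ≤ Q * ‖x‖ ^ 2) :
    dH X Y ≤ Real.log (P * Q / (p * q)) := by
  have hQ : 0 < Q := hq.trans_le hqQ
  have hsY (c : ℝ) : ((c : ℂ) • Y).IsHermitian := hY.isHermitian.smul (Complex.conj_ofReal c)
  have hre (c : ℝ) (x : Fin m → ℂ) :
      (star x ⬝ᵥ ((c : ℂ) • Y) *ᵥ x).re = c * (star x ⬝ᵥ Y *ᵥ x).re := by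
    rw [smul_mulVec, dotProduct_smul, smul_eq_mul, Complex.re_ofReal_mul]
  have hlo : (X - ((p / Q : ℝ) : ℂ) • Y).PosSemidef :=
    posSemidef_sub_of_re_le (hsY _) hX fun x => by
      rw [hre]
      calc p / Q * (star x ⬝ᵥ Y *ᵥ x).re ≤ p / Q * (Q * ‖x‖ ^ 2) :=
            mul_le_mul_of_nonneg_left (hYb x).2 (by positivity)
        _ = p * ‖x‖ ^ 2 := by field_simp
        _ ≤ (star x ⬝ᵥ X *ᵥ x).re := (hXb x).1
  have hhi : (((P / q : ℝ) : ℂ) • Y - X).PosSemidef :=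
    posSemidef_sub_of_re_le hX (hsY _) fun x => by
      rw [hre]
      calc (star x ⬝ᵥ X *ᵥ x).re ≤ P * ‖x‖ ^ 2 := (hXb x).2
        _ = P / q * (q * ‖x‖ ^ 2) := by field_simp
        _ ≤ P / q * (star x ⬝ᵥ Y *ᵥ x).re :=
            mul_le_mul_of_nonneg_left (hYb x).1 (div_nonneg (hp.le.trans hpP) hq.le)
  convert dH_le_log_div hY (by positivity) (div_le_div₀ (hp.trans_le hpP).le hpP hq hqQ) hlo hhi
    using 2
  field_simp

/-- A strictly positive linear map has finite projective diameter. -/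
theorem projective_diameter_finite (n m : ℕ)
    (Φ : Matrix (Fin n) (Fin n) ℂ →ₗ[ℂ] Matrix (Fin m) (Fin m) ℂ)
    (hΦ : ∀ A : Matrix (Fin n) (Fin n) ℂ, A.PosSemidef → A ≠ 0 → (Φ A).PosDef) :
    ∃ C : ℝ, ∀ A B : Matrix (Fin n) (Fin n) ℂ, A.PosDef → B.PosDef →
      dH (Φ A) (Φ B) ≤ C := by
  obtain ⟨ε, M, hε, hεM, hbounds⟩ := exists_trace_mul_norm_sq_bounds Φ hΦ
  have hC : 0 ≤ Real.log ((M / ε) ^ 2) :=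
    Real.log_nonneg (one_le_pow₀ ((one_le_div hε).mpr hεM))
  refine ⟨Real.log ((M / ε) ^ 2), fun A B hA hB => ?_⟩
  rcases isEmpty_or_nonempty (Fin n) with hn | hn
  · obtain rfl : A = 0 := Subsingleton.elim _ _
    obtain rfl : B = 0 := Subsingleton.elim _ _
    have h00 : dH (0 : Matrix (Fin m) (Fin m) ℂ) 0 ≤ Real.log (1 / 1) :=
      dH_le_log_div .zero one_pos le_rfl (by simpa using PosSemidef.zero)
        (by simpa using PosSemidef.zero)
    rw [div_one, Real.log_one] at h00
    rw [map_zero]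
    exact h00.trans hC
  have htr {A : Matrix (Fin n) (Fin n) ℂ} (hA : A.PosDef) : 0 < A.trace.re :=
    (Complex.pos_iff.mp hA.trace_pos).1
  have hΦ' {A : Matrix (Fin n) (Fin n) ℂ} (hA : A.PosDef) : (Φ A).PosDef :=
    hΦ A hA.posSemidef fun h => by simpa [h] using htr hA
  have ha := htr hA
  have hb := htr hB
  calc dH (Φ A) (Φ B)
      ≤ Real.log (M * A.trace.re * (M * B.trace.re) / (ε * A.trace.re * (ε * B.trace.re))) :=
        dH_le_log_of_re_bounds (hΦ' hA).isHermitian (hΦ' hB).posSemidef (by positivity)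
          (by positivity) (by gcongr) (by gcongr) (hbounds A hA.posSemidef)
          (hbounds B hB.posSemidef)
    _ = Real.log ((M / ε) ^ 2) := by
        congr 1
        field_simp
end

section
/- For any positive definite density matrix ρ on ℂⁿ ⊗ ℂᵐ, if χ = (A ⊗ B) ρ (A ⊗ B)* and χ' = (A' ⊗ B') ρ (A' ⊗ B')* are both precopulas (density matrices with uniform marginals (1/n)Iₙ and (1/m)Iₘ) arising as above with A, A' ∈ Mₙ(ℂ) and B, B' ∈ Mₘ(ℂ) invertible and satisfying A'*A' = A*A and B'*B' = B*B, then there exist unitaries U ∈ Mₙ(ℂ) and V ∈ Mₘ(ℂ) with χ' = (U ⊗ V) χ (U ⊗ V)*. -/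
open Matrix
open scoped ComplexOrder
open scoped Kronecker BigOperators
noncomputable def ptrace1 {n m : ℕ}
    (ρ : Matrix (Fin n × Fin m) (Fin n × Fin m) ℂ) : Matrix (Fin m) (Fin m) ℂ :=
  Matrix.of fun k l => ∑ i : Fin n, ρ (i, k) (i, l)

noncomputable def ptrace2 {n m : ℕ}
    (ρ : Matrix (Fin n × Fin m) (Fin n × Fin m) ℂ) : Matrix (Fin n) (Fin n) ℂ :=
  Matrix.of fun i j => ∑ k : Fin m, ρ (i, k) (j, k)

lemma aux_unitary {n : ℕ} (A A' : Matrix (Fin n) (Fin n) ℂ)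
    (hA : IsUnit A) (hAA : A'ᴴ * A' = Aᴴ * A) :
    (A' * A⁻¹) ∈ Matrix.unitaryGroup (Fin n) ℂ ∧ A' = (A' * A⁻¹) * A := by
  have hd : IsUnit A.det := (Matrix.isUnit_iff_isUnit_det A).mp hA
  constructor
  · rw [Matrix.mem_unitaryGroup_iff']
    have : star (A' * A⁻¹) = A⁻¹ᴴ * A'ᴴ := by
      simp [Matrix.star_eq_conjTranspose, Matrix.conjTranspose_mul]
    rw [this]
    calc A⁻¹ᴴ * A'ᴴ * (A' * A⁻¹) = A⁻¹ᴴ * (A'ᴴ * A') * A⁻¹ := by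
          simp [Matrix.mul_assoc]
      _ = A⁻¹ᴴ * (Aᴴ * A) * A⁻¹ := by rw [hAA]
      _ = A⁻¹ᴴ * Aᴴ * (A * A⁻¹) := by simp [Matrix.mul_assoc]
      _ = 1 := by
          rw [← Matrix.conjTranspose_mul, Matrix.mul_nonsing_inv _ hd]
          simp
  · rw [Matrix.mul_assoc, Matrix.nonsing_inv_mul _ hd, Matrix.mul_one]

/-- Two precopulas of the same state built from factorizations of the same positive
matrices are unitarily equivalent. -/
theorem precopula_unique_up_to_unitary (n m : ℕ)
    (ρ : Matrix (Fin n × Fin m) (Fin n × Fin m) ℂ)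
    (hρ : ρ.PosDef) (htr : ρ.trace = 1)
    (A A' : Matrix (Fin n) (Fin n) ℂ) (B B' : Matrix (Fin m) (Fin m) ℂ)
    (hA : IsUnit A) (hA' : IsUnit A') (hB : IsUnit B) (hB' : IsUnit B')
    (χ χ' : Matrix (Fin n × Fin m) (Fin n × Fin m) ℂ)
    (hχ : χ = (A ⊗ₖ B) * ρ * (A ⊗ₖ B)ᴴ)
    (hχ' : χ' = (A' ⊗ₖ B') * ρ * (A' ⊗ₖ B')ᴴ)
    (hpre : ptrace1 χ = ((m : ℂ))⁻¹ • (1 : Matrix (Fin m) (Fin m) ℂ) ∧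
      ptrace2 χ = ((n : ℂ))⁻¹ • (1 : Matrix (Fin n) (Fin n) ℂ))
    (hpre' : ptrace1 χ' = ((m : ℂ))⁻¹ • (1 : Matrix (Fin m) (Fin m) ℂ) ∧
      ptrace2 χ' = ((n : ℂ))⁻¹ • (1 : Matrix (Fin n) (Fin n) ℂ))
    (hAA : A'ᴴ * A' = Aᴴ * A) (hBB : B'ᴴ * B' = Bᴴ * B) :
    ∃ (U : Matrix (Fin n) (Fin n) ℂ) (V : Matrix (Fin m) (Fin m) ℂ),
      U ∈ Matrix.unitaryGroup (Fin n) ℂ ∧ V ∈ Matrix.unitaryGroup (Fin m) ℂ ∧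
      χ' = (U ⊗ₖ V) * χ * (U ⊗ₖ V)ᴴ := by
  obtain ⟨hU, hAeq⟩ := aux_unitary A A' hA hAA
  obtain ⟨hV, hBeq⟩ := aux_unitary B B' hB hBB
  refine ⟨A' * A⁻¹, B' * B⁻¹, hU, hV, ?_⟩
  have key : (A' ⊗ₖ B') = ((A' * A⁻¹) ⊗ₖ (B' * B⁻¹)) * (A ⊗ₖ B) := by
    rw [← Matrix.mul_kronecker_mul, ← hAeq, ← hBeq]
  rw [hχ', hχ, key, Matrix.conjTranspose_mul]
  simp only [Matrix.mul_assoc]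
end
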